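/- Let φ : Sp(2,ℝ) → ℂ be a K-bi-invariant function, i.e., φ(k₁·g·k₂) = φ(g) for all g ∈ Sp(2,ℝ) and k₁, k₂ ∈ K. Fix α ∈ ℝ, let D'_α = diag(e^α, e^α, e^{−α}, e^{−α}), let v = ((1+i)/√2)·I₂ ∈ U(2), and define χ̃_α : U(2) → ℂ by χ̃_α(u) = φ(D'_α·κ(u)·κ(v)·D'_α). Then χ̃_α is bi-invariant under the subgroup SO(2) = {R_θ : θ ∈ ℝ} of U(2), where R_θ is the rotation matrix with rows (cos θ, −sin θ) and (sin θ, cos θ): for all u ∈ U(2) and θ, θ' ∈ ℝ, χ̃_α(R_θ·u·R_{θ'}) = χ̃_α(u). -/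

import Mathlib

/-!
Since `R_θ` is a real matrix, `κ(R_θ)` is block diagonal `[[R_θ, 0], [0, R_θ]]` and so commutes
with `D'_α = diag(e^α I₂, e^{-α} I₂)`; since `v` is scalar, `κ(v)` commutes with every `κ(u)`.
Hence `D'_α κ(R_θ u R_θ') κ(v) D'_α = κ(R_θ) (D'_α κ(u) κ(v) D'_α) κ(R_θ')`, and the middle
factor is symplectic, so the `K`-bi-invariance of `φ` applies.
-/

open Real Complex Matrix

/-- The standard symplectic form matrix `J = [[0, I₂], [−I₂, 0]]`. -/
def Jmat : Matrix (Fin 4) (Fin 4) ℝ :=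
  Matrix.reindex finSumFinEquiv finSumFinEquiv
    (Matrix.fromBlocks (0 : Matrix (Fin 2) (Fin 2) ℝ) (1 : Matrix (Fin 2) (Fin 2) ℝ)
      (-1 : Matrix (Fin 2) (Fin 2) ℝ) (0 : Matrix (Fin 2) (Fin 2) ℝ))

/-- The symplectic group `Sp(2,ℝ)` as a set of 4×4 real matrices. -/
def Sp2 : Set (Matrix (Fin 4) (Fin 4) ℝ) := {g | gᵀ * Jmat * g = Jmat}

/-- The embedding `κ : M₂(ℂ) → M₄(ℝ)` sending `A + iB` to `[[A, −B], [B, A]]`. -/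
def kappa (u : Matrix (Fin 2) (Fin 2) ℂ) : Matrix (Fin 4) (Fin 4) ℝ :=
  Matrix.reindex finSumFinEquiv finSumFinEquiv
    (Matrix.fromBlocks (Matrix.of fun i j => (u i j).re)
      (Matrix.of fun i j => -(u i j).im)
      (Matrix.of fun i j => (u i j).im)
      (Matrix.of fun i j => (u i j).re))

/-- The maximal compact subgroup `K = κ(U(2))` of `Sp(2,ℝ)`. -/
def Kgp : Set (Matrix (Fin 4) (Fin 4) ℝ) :=
  {m | ∃ u ∈ Matrix.unitaryGroup (Fin 2) ℂ, m = kappa u}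

/-- `D(α₁, α₂) = diag(e^{α₁}, e^{α₂}, e^{−α₁}, e^{−α₂})`. -/
noncomputable def Dmat (α₁ α₂ : ℝ) : Matrix (Fin 4) (Fin 4) ℝ :=
  Matrix.diagonal ![Real.exp α₁, Real.exp α₂, Real.exp (-α₁), Real.exp (-α₂)]

/-- `D'_α = diag(e^α, e^α, e^{−α}, e^{−α})`. -/
noncomputable def Dalpha' (α : ℝ) : Matrix (Fin 4) (Fin 4) ℝ :=
  Matrix.diagonal ![Real.exp α, Real.exp α, Real.exp (-α), Real.exp (-α)]

/-- The central element `v = ((1+i)/√2)·I₂` of `U(2)`. -/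
noncomputable def vmat : Matrix (Fin 2) (Fin 2) ℂ :=
  ((1 + Complex.I) / (Real.sqrt 2 : ℂ)) • (1 : Matrix (Fin 2) (Fin 2) ℂ)

/-- The rotation matrix `R_θ`, viewed as an element of `U(2)`. -/
noncomputable def rot (θ : ℝ) : Matrix (Fin 2) (Fin 2) ℂ :=
  !![(Real.cos θ : ℂ), -(Real.sin θ : ℂ); (Real.sin θ : ℂ), (Real.cos θ : ℂ)]

@[simp] lemma finSumFinEquiv_two_two_symm_zero :
    (finSumFinEquiv (m := 2) (n := 2)).symm 0 = .inl 0 := rfl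

@[simp] lemma finSumFinEquiv_two_two_symm_one :
    (finSumFinEquiv (m := 2) (n := 2)).symm 1 = .inl 1 := rfl

@[simp] lemma finSumFinEquiv_two_two_symm_two :
    (finSumFinEquiv (m := 2) (n := 2)).symm 2 = .inr 0 := rfl

@[simp] lemma finSumFinEquiv_two_two_symm_three :
    (finSumFinEquiv (m := 2) (n := 2)).symm 3 = .inr 1 := rfl

lemma kappa_mul (u w : Matrix (Fin 2) (Fin 2) ℂ) : kappa (u * w) = kappa u * kappa w := by
  ext i j
  fin_cases i <;> fin_cases j <;>
    · simp [kappa, Matrix.mul_apply, Fin.sum_univ_two, Fin.sum_univ_four]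
      ring

lemma kappa_transpose (u : Matrix (Fin 2) (Fin 2) ℂ) : (kappa u)ᵀ = kappa uᴴ := by
  ext i j
  fin_cases i <;> fin_cases j <;> simp [kappa]

lemma kappa_neg_I_smul_one : kappa (-Complex.I • 1) = Jmat := by
  ext i j
  fin_cases i <;> fin_cases j <;> simp [kappa, Jmat, Matrix.one_apply]

lemma commute_kappa_vmat (u : Matrix (Fin 2) (Fin 2) ℂ) : Commute (kappa u) (kappa vmat) := by
  have h : Commute u vmat := (Commute.one_right u).smul_right _
  rw [Commute, SemiconjBy, ← kappa_mul, ← kappa_mul, h.eq]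

lemma mul_mem_Sp2 {a b : Matrix (Fin 4) (Fin 4) ℝ} (ha : a ∈ Sp2) (hb : b ∈ Sp2) :
    a * b ∈ Sp2 := by
  change (a * b)ᵀ * Jmat * (a * b) = Jmat
  calc (a * b)ᵀ * Jmat * (a * b) = bᵀ * (aᵀ * Jmat * a) * b := by
        simp only [Matrix.transpose_mul, Matrix.mul_assoc]
    _ = Jmat := by rw [ha, hb]

lemma kappa_mem_Sp2 {u : Matrix (Fin 2) (Fin 2) ℂ} (hu : u ∈ Matrix.unitaryGroup (Fin 2) ℂ) :
    kappa u ∈ Sp2 := by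
  have hu' : uᴴ * u = 1 := Matrix.mem_unitaryGroup_iff'.mp hu
  change (kappa u)ᵀ * Jmat * kappa u = Jmat
  rw [kappa_transpose, ← kappa_neg_I_smul_one, ← kappa_mul, ← kappa_mul, Matrix.mul_smul,
    Matrix.mul_one, Matrix.smul_mul, hu']

lemma Dalpha'_mem_Sp2 (α : ℝ) : Dalpha' α ∈ Sp2 := by
  ext i j
  fin_cases i <;> fin_cases j <;>
    simp [Dalpha', Jmat, Matrix.mul_apply, Fin.sum_univ_four, ← Real.exp_add]

lemma commute_Dalpha'_kappa {u : Matrix (Fin 2) (Fin 2) ℂ} (hu : ∀ i j, (u i j).im = 0)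
    (α : ℝ) : Commute (Dalpha' α) (kappa u) := by
  ext i j
  fin_cases i <;> fin_cases j <;> simp [Dalpha', kappa, hu, mul_comm]

lemma im_rot (θ : ℝ) (i j : Fin 2) : (rot θ i j).im = 0 := by
  fin_cases i <;> fin_cases j <;> simp [rot]

lemma rot_mem_unitaryGroup (θ : ℝ) : rot θ ∈ Matrix.unitaryGroup (Fin 2) ℂ := by
  rw [Matrix.mem_unitaryGroup_iff']
  ext i j
  fin_cases i <;> fin_cases j <;>
    simp [rot, Matrix.mul_apply, Fin.sum_univ_two, Complex.conj_ofReal, -Complex.ofReal_cos,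
      -Complex.ofReal_sin] <;>
    norm_cast <;> simp [← sq, mul_comm]

lemma smul_one_mem_unitaryGroup {n : Type*} [Fintype n] [DecidableEq n] {c : ℂ} (hc : ‖c‖ = 1) :
    c • (1 : Matrix n n ℂ) ∈ Matrix.unitaryGroup n ℂ := by
  rw [Matrix.mem_unitaryGroup_iff', star_smul, star_one, smul_mul_smul, Matrix.one_mul,
    Complex.star_def, ← Complex.normSq_eq_conj_mul_self, Complex.normSq_eq_norm_sq, hc]
  simp

lemma vmat_mem_unitaryGroup : vmat ∈ Matrix.unitaryGroup (Fin 2) ℂ := by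
  refine smul_one_mem_unitaryGroup ?_
  have h := Complex.norm_add_mul_I 1 1
  rw [norm_div, Complex.norm_real, Real.norm_of_nonneg (Real.sqrt_nonneg 2)]
  norm_num at h ⊢
  rw [h, div_self (by positivity)]

lemma mul_mul_mul_mul_eq_of_commute {M : Type*} [Monoid M] {d r r' w : M} (hr : Commute d r)
    (hr' : Commute d r') (hw : Commute r' w) (u : M) :
    d * (r * u * r') * w * d = r * (d * u * w * d) * r' :=
  calc d * (r * u * r') * w * d = (d * r) * u * (r' * w) * d := by simp only [mul_assoc]
    _ = r * d * u * (w * r') * d := by rw [hr.eq, hw.eq]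
    _ = r * (d * u * w * (r' * d)) := by simp only [mul_assoc]
    _ = r * (d * u * w * d) * r' := by rw [← hr'.eq]; simp only [mul_assoc]

theorem chi_alpha_biinvariant (φ : Matrix (Fin 4) (Fin 4) ℝ → ℂ)
    (hφ : ∀ g ∈ Sp2, ∀ k₁ ∈ Kgp, ∀ k₂ ∈ Kgp, φ (k₁ * g * k₂) = φ g)
    (α : ℝ) (χ : Matrix (Fin 2) (Fin 2) ℂ → ℂ)
    (hχ : ∀ u : Matrix (Fin 2) (Fin 2) ℂ,
      χ u = φ (Dalpha' α * kappa u * kappa vmat * Dalpha' α)) :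
    ∀ u ∈ Matrix.unitaryGroup (Fin 2) ℂ, ∀ θ θ' : ℝ,
      χ (rot θ * u * rot θ') = χ u := by
  intro u hu θ θ'
  have hg : Dalpha' α * kappa u * kappa vmat * Dalpha' α ∈ Sp2 :=
    mul_mem_Sp2 (mul_mem_Sp2 (mul_mem_Sp2 (Dalpha'_mem_Sp2 α) (kappa_mem_Sp2 hu))
      (kappa_mem_Sp2 vmat_mem_unitaryGroup)) (Dalpha'_mem_Sp2 α)
  rw [hχ, hχ, kappa_mul, kappa_mul,
    mul_mul_mul_mul_eq_of_commute (commute_Dalpha'_kappa (im_rot θ) α)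
      (commute_Dalpha'_kappa (im_rot θ') α) (commute_kappa_vmat (rot θ'))]
  exact hφ _ hg _ ⟨rot θ, rot_mem_unitaryGroup θ, rfl⟩ _ ⟨rot θ', rot_mem_unitaryGroup θ', rfl⟩
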